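/- Let K be an imaginary quadratic field with ring of integers 𝒪_K, let p be an odd rational prime that is split in K (i.e. p𝒪_K = 𝔭·𝔭̄ for distinct prime ideals 𝔭, 𝔭̄), and let n ≥ 2 be an integer. Then the number of characters of (𝒪_K/p^n𝒪_K)^× that are trivial on rational integers and nontrivial on the kernel of the natural reduction map (𝒪_K/p^n𝒪_K)^× → (𝒪_K/p^{n−1}𝒪_K)^× equals p^{n−2}(p − 1)². -/

import Mathlib

/-!
Since `p` splits, the Chinese remainder theorem gives `𝓞 K / p^n ≅ 𝓞 K / 𝔭^n × 𝓞 K / 𝔭̄^n`, and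
each factor is `ℤ / p^n`: it has `p^n` elements as `N 𝔭 · N 𝔭̄ = p^2`, and characteristic `p^n` as
`p^k ∈ 𝔭^n` forces `n ≤ k` (`𝔭` does not divide `𝔭̄`). With `U = (ℤ / p^n)ˣ`, the units that are
rational integers become the diagonal `Δ ≤ U × U` and the kernel of reduction mod `p^(n-1)`
becomes `L × L`, `L` the kernel of `U → (ℤ / p^(n-1))ˣ`. Characters trivial on `Δ` but not on
`L × L` number `[U × U : Δ] - [U × U : Δ ⊔ L × L] = |U| - [U : L] = φ(p^n) - φ(p^(n-1))`.
-/

open NumberField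

section Characters

variable {G : Type*} [CommGroup G] [Finite G]

theorem card_characters_trivial_on (H : Subgroup G) :
    Nat.card {χ : G →* ℂˣ // ∀ h ∈ H, χ h = 1} = H.index := by
  have : NeZero (Monoid.exponent G) := ⟨Monoid.exponent_ne_zero_of_finite⟩
  rw [H.index_eq_card, ← CommGroup.card_domRestrictHom_ker ℂ H]
  refine Nat.card_congr (Equiv.subtypeEquivRight fun χ => ?_)
  simp [MonoidHom.ext_iff]

theorem card_characters_trivial_on_nontrivial_on (H K : Subgroup G) :
    Nat.card {χ : G →* ℂˣ // (∀ h ∈ H, χ h = 1) ∧ ∃ k ∈ K, χ k ≠ 1} =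
      H.index - (H ⊔ K).index := by
  have : NeZero (Monoid.exponent G) := ⟨Monoid.exponent_ne_zero_of_finite⟩
  have : Finite (G →* ℂˣ) :=
    .of_equiv _ (CommGroup.monoidHom_mulEquiv_of_hasEnoughRootsOfUnity G ℂ).some.symm.toEquiv
  have trivial_on_sup (χ : G →* ℂˣ) :
      (∀ g ∈ H ⊔ K, χ g = 1) ↔ (∀ h ∈ H, χ h = 1) ∧ ∀ k ∈ K, χ k = 1 := by
    simp only [← MonoidHom.mem_ker, ← SetLike.le_def, sup_le_iff]
  have hsub : {χ : G →* ℂˣ | ∀ g ∈ H ⊔ K, χ g = 1} ⊆ {χ | ∀ h ∈ H, χ h = 1} :=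
    fun χ hχ => ((trivial_on_sup χ).1 hχ).1
  rw [← card_characters_trivial_on, ← card_characters_trivial_on]
  simp only [show ∀ P : (G →* ℂˣ) → Prop, Nat.card {χ // P χ} = {χ | P χ}.ncard from
    fun P => Nat.card_coe_set_eq _]
  rw [← Set.ncard_sdiff hsub]
  congr 1
  ext χ
  simp only [Set.mem_ofPred_eq, Set.mem_sdiff, trivial_on_sup, not_and, not_forall, exists_prop]
  tauto

end Characters

section ProdDiagonal

variable {U : Type*} [CommGroup U]

theorem surjective_fst_div_snd : Function.Surjective (MonoidHom.fst U U / MonoidHom.snd U U) :=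
  fun v => ⟨(v, 1), by simp⟩

theorem index_ker_fst_div_snd :
    (MonoidHom.fst U U / MonoidHom.snd U U).ker.index = Nat.card U := by
  rw [Subgroup.index_ker, MonoidHom.range_eq_top_of_surjective _ surjective_fst_div_snd,
    Subgroup.card_top]

theorem ker_fst_div_snd_sup_prod (L : Subgroup U) :
    (MonoidHom.fst U U / MonoidHom.snd U U).ker ⊔ L.prod L =
      L.comap (MonoidHom.fst U U / MonoidHom.snd U U) := by
  refine le_antisymm (sup_le (fun w hw => ?_) fun w hw => ?_) fun w hw => ?_
  · simp_all [MonoidHom.mem_ker]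
  · exact div_mem (Subgroup.mem_prod.1 hw).1 (Subgroup.mem_prod.1 hw).2
  · rw [show w = (w.2, w.2) * (w.1 / w.2, 1) by ext <;> simp]
    exact mul_mem (Subgroup.mem_sup_left (by simp [MonoidHom.mem_ker]))
      (Subgroup.mem_sup_right (Subgroup.mem_prod.2 ⟨hw, one_mem L⟩))

theorem index_ker_fst_div_snd_sup_prod (L : Subgroup U) :
    ((MonoidHom.fst U U / MonoidHom.snd U U).ker ⊔ L.prod L).index = L.index := by
  rw [ker_fst_div_snd_sup_prod, Subgroup.index_comap_of_surjective _ surjective_fst_div_snd]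

end ProdDiagonal

namespace ZMod

variable {M N : ℕ}

theorem castHom_eq_zero_iff_natCast_dvd (h : M ∣ N) (x : ZMod N) :
    castHom h (ZMod M) x = 0 ↔ (M : ZMod N) ∣ x := by
  constructor
  · intro hx
    obtain ⟨k, rfl⟩ := intCast_surjective x
    rw [map_intCast, intCast_zmod_eq_zero_iff_dvd] at hx
    simpa using map_dvd (Int.castRingHom (ZMod N)) hx
  · rintro ⟨c, rfl⟩
    rw [map_mul, map_natCast, natCast_self, zero_mul]

theorem unitsMap_eq_one_iff (h : M ∣ N) (u : (ZMod N)ˣ) :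
    unitsMap h u = 1 ↔ (M : ZMod N) ∣ u - 1 := by
  rw [← castHom_eq_zero_iff_natCast_dvd h, map_sub, map_one, sub_eq_zero, Units.ext_iff]
  rfl

theorem index_ker_unitsMap [NeZero N] (h : M ∣ N) : (unitsMap h).ker.index = M.totient := by
  have : NeZero M := ⟨fun hM => NeZero.ne N (Nat.eq_zero_of_zero_dvd (hM ▸ h))⟩
  rw [Subgroup.index_ker, MonoidHom.range_eq_top_of_surjective _ (unitsMap_surjective h),
    Subgroup.card_top, Nat.card_eq_fintype_card, card_units_eq_totient]

end ZMod

section UnitsEquivProd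

variable {R S T : Type*} [Semiring R] [Semiring S] [Semiring T] (e : R ≃+* S × T)

def unitsEquivProd : Rˣ ≃* Sˣ × Tˣ :=
  (Units.mapEquiv e.toMulEquiv).trans MulEquiv.prodUnits

@[simp]
theorem coe_unitsEquivProd_fst (u : Rˣ) : ((unitsEquivProd e u).1 : S) = (e u).1 := rfl

@[simp]
theorem coe_unitsEquivProd_snd (u : Rˣ) : ((unitsEquivProd e u).2 : T) = (e u).2 := rfl

end UnitsEquivProd

section ProdZMod

variable {R : Type*} [CommRing R] {M N : ℕ} (e : R ≃+* ZMod N × ZMod N)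

theorem exists_intCast_eq_iff_fst_eq_snd (r : R) : (∃ m : ℤ, r = m) ↔ (e r).1 = (e r).2 := by
  constructor
  · rintro ⟨m, rfl⟩
    simp
  · intro h
    obtain ⟨m, hm⟩ := ZMod.intCast_surjective (e r).1
    exact ⟨m, e.injective (Prod.ext (by simp [hm]) (by simp [hm, ← h]))⟩

theorem natCast_dvd_iff_castHom_eq_zero (h : M ∣ N) (r : R) :
    (M : R) ∣ r ↔ ZMod.castHom h (ZMod M) (e r).1 = 0 ∧ ZMod.castHom h (ZMod M) (e r).2 = 0 := by
  rw [← map_dvd_iff e, map_natCast, prod_dvd_iff, ZMod.castHom_eq_zero_iff_natCast_dvd,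
    ZMod.castHom_eq_zero_iff_natCast_dvd]
  rfl

theorem mem_comap_ker_fst_div_snd_iff (u : Rˣ) :
    u ∈ (MonoidHom.fst (ZMod N)ˣ (ZMod N)ˣ / MonoidHom.snd _ _).ker.comap (unitsEquivProd e) ↔
      ∃ m : ℤ, (u : R) = m := by
  rw [exists_intCast_eq_iff_fst_eq_snd e, Subgroup.mem_comap, MonoidHom.mem_ker]
  simp [div_eq_one, Units.ext_iff]

theorem mem_comap_prod_ker_unitsMap_iff (h : M ∣ N) (u : Rˣ) :
    u ∈ ((ZMod.unitsMap h).ker.prod (ZMod.unitsMap h).ker).comap (unitsEquivProd e) ↔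
      (M : R) ∣ u - 1 := by
  rw [natCast_dvd_iff_castHom_eq_zero e h, Subgroup.mem_comap, Subgroup.mem_prod,
    MonoidHom.mem_ker, MonoidHom.mem_ker, ZMod.unitsMap_eq_one_iff, ZMod.unitsMap_eq_one_iff,
    ZMod.castHom_eq_zero_iff_natCast_dvd, ZMod.castHom_eq_zero_iff_natCast_dvd]
  simp

end ProdZMod

theorem card_characters_trivial_on_intCast_nontrivial_on_natCast_dvd_sub_one {R : Type*}
    [CommRing R] {M N : ℕ} [NeZero N] (e : R ≃+* ZMod N × ZMod N) (h : M ∣ N) :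
    Nat.card {χ : Rˣ →* ℂˣ // (∀ u : Rˣ, (∃ m : ℤ, (u : R) = m) → χ u = 1) ∧
      ∃ u : Rˣ, (M : R) ∣ u - 1 ∧ χ u ≠ 1} = N.totient - M.totient := by
  have : Finite Rˣ := .of_equiv _ (unitsEquivProd e).symm.toEquiv
  let F : Rˣ →* (ZMod N)ˣ × (ZMod N)ˣ := unitsEquivProd e
  have hF : Function.Surjective F := (unitsEquivProd e).surjective
  let Δ := (MonoidHom.fst (ZMod N)ˣ (ZMod N)ˣ / MonoidHom.snd _ _).ker
  let L := (ZMod.unitsMap h).ker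
  calc _ = Nat.card {χ : Rˣ →* ℂˣ //
        (∀ u ∈ Δ.comap F, χ u = 1) ∧ ∃ u ∈ (L.prod L).comap F, χ u ≠ 1} := by
        refine Nat.card_congr (Equiv.subtypeEquivRight fun χ => ?_)
        simp only [F, Δ, L, mem_comap_ker_fst_div_snd_iff, mem_comap_prod_ker_unitsMap_iff]
    _ = N.totient - M.totient := by
      rw [card_characters_trivial_on_nontrivial_on, Subgroup.comap_sup_eq F _ _ hF,
        Subgroup.index_comap_of_surjective _ hF, Subgroup.index_comap_of_surjective _ hF,
        index_ker_fst_div_snd, index_ker_fst_div_snd_sup_prod, ZMod.index_ker_unitsMap,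
        Nat.card_eq_fintype_card, ZMod.card_units_eq_totient]

theorem Ideal.Quotient.exists_mk_eq_and_mk_eq_one_iff {A : Type*} [CommRing A] {c d : A}
    (h : c ∣ d) (r : A ⧸ Ideal.span {d}) :
    (∃ x, Ideal.Quotient.mk (Ideal.span {d}) x = r ∧ Ideal.Quotient.mk (Ideal.span {c}) x = 1) ↔
      Ideal.Quotient.mk (Ideal.span {d}) c ∣ r - 1 := by
  constructor
  · rintro ⟨x, rfl, hx⟩
    have : c ∣ x - 1 := by
      rw [← Ideal.mem_span_singleton, ← Ideal.Quotient.eq_zero_iff_mem, map_sub, hx, map_one,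
        sub_self]
    simpa using map_dvd (Ideal.Quotient.mk (Ideal.span {d})) this
  · intro hr
    obtain ⟨x, rfl⟩ := Ideal.Quotient.mk_surjective r
    refine ⟨x, rfl, ?_⟩
    -- reduce the divisibility modulo `c`, where `c` itself becomes `0`
    have := map_dvd (Ideal.Quotient.factor (Ideal.span_singleton_le_span_singleton.2 h)) hr
    rwa [map_sub, map_one, Ideal.Quotient.factor_mk, Ideal.Quotient.factor_mk,
      Ideal.Quotient.eq_zero_iff_mem.2 (Ideal.mem_span_singleton_self c), zero_dvd_iff,
      sub_eq_zero] at this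

theorem totient_prime_pow_sub_totient_prime_pow_pred {p n : ℕ} (hp : p.Prime) (hn : 2 ≤ n) :
    (p ^ n).totient - (p ^ (n - 1)).totient = p ^ (n - 2) * (p - 1) ^ 2 := by
  obtain ⟨m, rfl⟩ := Nat.exists_eq_add_of_le' hn
  rw [Nat.add_sub_cancel, show m + 2 - 1 = m + 1 by omega, Nat.totient_prime_pow_succ hp,
    Nat.totient_prime_pow_succ hp, pow_succ, mul_right_comm, ← Nat.mul_sub_one, sq, mul_assoc]

section SplitPrime

open Ideal

variable {A : Type*} [CommRing A] {p : ℕ} {P Pbar : Ideal A}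

theorem ne_bot_of_span_natCast_eq_mul [CharZero A] (hp : p.Prime)
    (hsplit : span {(p : A)} = P * Pbar) : P ≠ ⊥ :=
  left_ne_zero_of_mul (hsplit ▸ (span_singleton_eq_bot.not.2 (Nat.cast_ne_zero.2 hp.ne_zero)))

variable [IsDedekindDomain A]

theorem absNorm_eq_of_span_natCast_eq_mul [Module.Free ℤ A] [Module.Finite ℤ A]
    (hA : Module.finrank ℤ A = 2) (hp : p.Prime) (hP : P.IsPrime) (hPbar : Pbar.IsPrime)
    (hsplit : span {(p : A)} = P * Pbar) :
    absNorm P = p := by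
  have hprod : absNorm P * absNorm Pbar = p ^ 2 := by
    rw [← map_mul, ← hsplit, absNorm_span_natCast, hA]
  obtain ⟨i, hi, hPi⟩ := (Nat.dvd_prime_pow hp).1 (Dvd.intro _ hprod)
  have hP1 : absNorm P ≠ 1 := fun h => hP.ne_top (absNorm_eq_one_iff.1 h)
  have hPbar1 : absNorm Pbar ≠ 1 := fun h => hPbar.ne_top (absNorm_eq_one_iff.1 h)
  interval_cases i
  · exact absurd hPi hP1
  · simpa using hPi
  · rw [hPi] at hprod
    exact absurd (Nat.eq_of_mul_eq_mul_left (pow_pos hp.pos 2) (hprod.trans (mul_one _).symm))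
      hPbar1

variable [CharZero A]

theorem natCast_pow_mem_pow_iff (hp : p.Prime) (hP : P.IsPrime) (hPbar : Pbar.IsPrime)
    (hne : P ≠ Pbar) (hsplit : span {(p : A)} = P * Pbar) (k n : ℕ) :
    (p : A) ^ k ∈ P ^ n ↔ n ≤ k := by
  have hPprime : Prime P := prime_of_isPrime (ne_bot_of_span_natCast_eq_mul hp hsplit) hP
  have hPbarmax : Pbar.IsMaximal :=
    hPbar.isMaximal (ne_bot_of_span_natCast_eq_mul hp ((mul_comm P Pbar) ▸ hsplit))
  have not_dvd : ¬ P ∣ Pbar ^ k := fun h =>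
    hne (hPbarmax.eq_of_le hP.ne_top (dvd_iff_le.1 (hPprime.dvd_of_dvd_pow h))).symm
  rw [← span_singleton_le_iff_mem, ← dvd_iff_le, ← span_singleton_pow, hsplit, mul_pow]
  exact ⟨fun h => (pow_dvd_pow_iff hPprime.ne_zero hPprime.not_isUnit).1
    (hPprime.pow_dvd_of_dvd_mul_right n not_dvd h), fun h => (pow_dvd_pow P h).mul_right _⟩

theorem addOrderOf_one_quotient_pow (hp : p.Prime) (hP : P.IsPrime) (hPbar : Pbar.IsPrime)
    (hne : P ≠ Pbar) (hsplit : span {(p : A)} = P * Pbar) (n : ℕ) :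
    addOrderOf (1 : A ⧸ P ^ n) = p ^ n := by
  have nsmul_one_eq_zero (k : ℕ) : p ^ k • (1 : A ⧸ P ^ n) = 0 ↔ n ≤ k := by
    rw [nsmul_one, ← map_natCast (Ideal.Quotient.mk (P ^ n)), Quotient.eq_zero_iff_mem,
      Nat.cast_pow, natCast_pow_mem_pow_iff hp hP hPbar hne hsplit]
  obtain ⟨i, hi, hord⟩ := (Nat.dvd_prime_pow hp).1
    (addOrderOf_dvd_of_nsmul_eq_zero ((nsmul_one_eq_zero n).2 le_rfl))
  have hni : n ≤ i := (nsmul_one_eq_zero i).1 (hord ▸ addOrderOf_nsmul_eq_zero 1)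
  rw [hord, le_antisymm hi hni]

variable [Module.Free ℤ A] [Module.Finite ℤ A]

noncomputable def quotientPowEquivZMod (hA : Module.finrank ℤ A = 2) (hp : p.Prime)
    (hP : P.IsPrime) (hPbar : Pbar.IsPrime) (hne : P ≠ Pbar) (hsplit : span {(p : A)} = P * Pbar)
    (n : ℕ) : A ⧸ P ^ n ≃+* ZMod (p ^ n) :=
  have : CharP (A ⧸ P ^ n) (p ^ n) :=
    addOrderOf_one_quotient_pow hp hP hPbar hne hsplit n ▸ CharP.addOrderOf_one _
  have hcard : Nat.card (A ⧸ P ^ n) = p ^ n := by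
    rw [← Submodule.cardQuot_apply, ← absNorm_apply, map_pow,
      absNorm_eq_of_span_natCast_eq_mul hA hp hP hPbar hsplit]
  have : Finite (A ⧸ P ^ n) := Nat.finite_of_card_ne_zero (hcard ▸ pow_ne_zero n hp.ne_zero)
  have : Fintype (A ⧸ P ^ n) := Fintype.ofFinite _
  (ZMod.ringEquiv _ (Nat.card_eq_fintype_card.symm.trans hcard)).symm

noncomputable def quotientSpanPowEquivZModProd (hA : Module.finrank ℤ A = 2) (hp : p.Prime)
    (hP : P.IsPrime) (hPbar : Pbar.IsPrime) (hne : P ≠ Pbar) (hsplit : span {(p : A)} = P * Pbar)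
    (n : ℕ) : A ⧸ span {(p : A) ^ n} ≃+* ZMod (p ^ n) × ZMod (p ^ n) :=
  have hcop : IsCoprime (P ^ n) (Pbar ^ n) := by
    refine IsCoprime.pow (isCoprime_iff_sup_eq.2 ?_)
    exact (hP.isMaximal (ne_bot_of_span_natCast_eq_mul hp hsplit)).coprime_of_ne
      (hPbar.isMaximal (ne_bot_of_span_natCast_eq_mul hp ((mul_comm P Pbar) ▸ hsplit))) hne
  (quotEquivOfEq (by rw [← span_singleton_pow, hsplit, mul_pow])).trans <|
    (quotientMulEquivQuotientProd _ _ hcop).trans <|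
      RingEquiv.prodCongr (quotientPowEquivZMod hA hp hP hPbar hne hsplit n)
        (quotientPowEquivZMod hA hp hPbar hP hne.symm ((mul_comm P Pbar) ▸ hsplit) n)

end SplitPrime

theorem card_characters_trivial_on_Int_primitive_split_general
    (K : Type*) [Field K] [NumberField K]
    (hdeg : Module.finrank ℚ K = 2)
    (p : ℕ) (hp : p.Prime)
    (P Pbar : Ideal (𝓞 K)) (hP : P.IsPrime) (hPbar : Pbar.IsPrime) (hne : P ≠ Pbar)
    (hsplit : Ideal.span {(p : 𝓞 K)} = P * Pbar)
    (n : ℕ) (hn : 2 ≤ n) :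
    Nat.card {χ : (𝓞 K ⧸ Ideal.span {(p : 𝓞 K) ^ n})ˣ →* ℂˣ //
      (∀ u : (𝓞 K ⧸ Ideal.span {(p : 𝓞 K) ^ n})ˣ,
        (∃ m : ℤ, (u : 𝓞 K ⧸ Ideal.span {(p : 𝓞 K) ^ n}) =
          Ideal.Quotient.mk (Ideal.span {(p : 𝓞 K) ^ n}) (m : 𝓞 K)) →
        χ u = 1) ∧
      ∃ (u : (𝓞 K ⧸ Ideal.span {(p : 𝓞 K) ^ n})ˣ) (x : 𝓞 K),
        Ideal.Quotient.mk (Ideal.span {(p : 𝓞 K) ^ n}) x =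
          (u : 𝓞 K ⧸ Ideal.span {(p : 𝓞 K) ^ n}) ∧
        Ideal.Quotient.mk (Ideal.span {(p : 𝓞 K) ^ (n - 1)}) x = 1 ∧
        χ u ≠ 1} = p ^ (n - 2) * (p - 1) ^ 2 := by
  have : NeZero (p ^ n) := ⟨pow_ne_zero n hp.ne_zero⟩
  have hdvd : p ^ (n - 1) ∣ p ^ n := pow_dvd_pow p (n.sub_le 1)
  rw [← totient_prime_pow_sub_totient_prime_pow_pred hp hn,
    ← card_characters_trivial_on_intCast_nontrivial_on_natCast_dvd_sub_one
      (quotientSpanPowEquivZModProd (RingOfIntegers.rank K ▸ hdeg) hp hP hPbar hne hsplit n) hdvd]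
  refine Nat.card_congr (Equiv.subtypeEquivRight fun χ => ?_)
  have hcast : ((p ^ (n - 1) : ℕ) : 𝓞 K ⧸ Ideal.span {(p : 𝓞 K) ^ n}) =
      Ideal.Quotient.mk _ ((p : 𝓞 K) ^ (n - 1)) := by
    simp
  simp only [map_intCast, hcast,
    ← Ideal.Quotient.exists_mk_eq_and_mk_eq_one_iff (pow_dvd_pow _ (n.sub_le 1)),
    ← exists_and_right, and_assoc]

/-- Let `K` be an imaginary quadratic field, `p` an odd rational prime that is split in
`K` (i.e. `p 𝓞 K = 𝔭 · 𝔭̄` for distinct prime ideals `𝔭`, `𝔭̄`), and `n ≥ 2`. Then the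
number of characters of `(𝓞 K / p^n 𝓞 K)ˣ` that are trivial on rational integers and
nontrivial on the kernel of the natural reduction map
`(𝓞 K / p^n 𝓞 K)ˣ → (𝓞 K / p^(n−1) 𝓞 K)ˣ` equals `p^(n−2) (p − 1)²`.
(A unit `u` lies in that kernel exactly when some (equivalently, any) lift `x ∈ 𝓞 K` of
`u` reduces to `1` modulo `p^(n−1) 𝓞 K`.) -/
theorem card_characters_trivial_on_Int_primitive_split
    (K : Type*) [Field K] [NumberField K]
    (hdeg : Module.finrank ℚ K = 2) (himag : IsEmpty (K →+* ℝ))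
    (p : ℕ) (hp : p.Prime) (hp2 : p ≠ 2)
    (P Pbar : Ideal (𝓞 K)) (hP : P.IsPrime) (hPbar : Pbar.IsPrime) (hne : P ≠ Pbar)
    (hsplit : Ideal.span {(p : 𝓞 K)} = P * Pbar)
    (n : ℕ) (hn : 2 ≤ n) :
    Nat.card {χ : (𝓞 K ⧸ Ideal.span {(p : 𝓞 K) ^ n})ˣ →* ℂˣ //
      (∀ u : (𝓞 K ⧸ Ideal.span {(p : 𝓞 K) ^ n})ˣ,
        (∃ m : ℤ, (u : 𝓞 K ⧸ Ideal.span {(p : 𝓞 K) ^ n}) =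
          Ideal.Quotient.mk (Ideal.span {(p : 𝓞 K) ^ n}) (m : 𝓞 K)) →
        χ u = 1) ∧
      ∃ (u : (𝓞 K ⧸ Ideal.span {(p : 𝓞 K) ^ n})ˣ) (x : 𝓞 K),
        Ideal.Quotient.mk (Ideal.span {(p : 𝓞 K) ^ n}) x =
          (u : 𝓞 K ⧸ Ideal.span {(p : 𝓞 K) ^ n}) ∧
        Ideal.Quotient.mk (Ideal.span {(p : 𝓞 K) ^ (n - 1)}) x = 1 ∧
        χ u ≠ 1} = p ^ (n - 2) * (p - 1) ^ 2 :=
  card_characters_trivial_on_Int_primitive_split_general K hdeg p hp P Pbar hP hPbar hne hsplit n hn
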